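/- Let G be a finite simple directed graph without self-loops on vertex set V, and let G' be the directed graph on V whose edges are exactly those edges of G that belong to a unicycle of G. Then the following four statements are equivalent: (1) for each clique K of U(Ḡ), the induced subgraph G|_K contains no directed cycle; (2) for each S ⊆ V, if G|_S contains a directed cycle, then G|_S contains a bidirectional edge, i.e., there exist i, j ∈ S with (i,j) ∈ E(G) and (j,i) ∈ E(G); (3) no unidirectional edge of G belongs to a unicycle of G; (4) G' is bidirectional. -/

import Mathlib

/-! A chordless directed cycle is exactly a unicycle, and a cycle of minimal length inside `S` is
chordless, since a chord `v p → v q` with `q ≠ p + 1` closes the shorter cycle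
`v q → v (q + 1) → ⋯ → v p → v q`. So `G|_S` contains a directed cycle iff `S` contains a unicycle.
In a unicycle on `m + 2` vertices a bidirectional edge `a → b → a` forces `m + 2 = 2`, so the
unicycle is a single bidirectional edge. Hence statements (2), (3) and (4) all say that every
unicycle of `G` is a bidirectional edge, and (1) is the contrapositive of (2). -/

namespace IC

/-- The graph obtained by removing the edge `(a, b)`. -/
def removeEdge {V : Type*} (E : V → V → Prop) (a b : V) : V → V → Prop :=
  fun x y => E x y ∧ ¬(x = a ∧ y = b)

/-- The subgraph induced on `S` contains a directed cycle. -/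
def HasCycleIn {V : Type*} (E : V → V → Prop) (S : Set V) : Prop :=
  ∃ (m : ℕ) (v : Fin (m + 2) → V), Function.Injective v ∧ (∀ i, v i ∈ S) ∧
    ∀ i, E (v i) (v (i + 1))

/-- The MAIS outer bound region `ℛ_MAIS(G)`. -/
def maisRegion {n : ℕ} (E : Fin n → Fin n → Prop) : Set (Fin n → ℝ) :=
  {R | (∀ j, 0 ≤ R j) ∧
    ∀ S : Finset (Fin n), ¬ HasCycleIn E ↑S → ∑ j ∈ S, R j ≤ 1}

/-- The subgraph induced on `S` is a unicycle: `|S| ≥ 2` and `S` admits an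
enumeration `v_0, …, v_{m−1}` such that the edges of the induced subgraph are
exactly the directed Hamiltonian cycle `v_0 → v_1 → ⋯ → v_{m−1} → v_0`. -/
def IsUnicycle {V : Type*} (E : V → V → Prop) (S : Set V) : Prop :=
  ∃ (m : ℕ) (v : Fin (m + 2) → V), Function.Injective v ∧ Set.range v = S ∧
    ∀ a b, a ∈ S → b ∈ S → (E a b ↔ ∃ i, v i = a ∧ v (i + 1) = b)

/-- The edge `(x, y)` belongs to a unicycle of the graph. -/
def InUnicycle {V : Type*} (E : V → V → Prop) (x y : V) : Prop :=
  E x y ∧ ∃ S : Set V, IsUnicycle E S ∧ x ∈ S ∧ y ∈ S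

variable {V : Type*} {E : V → V → Prop} {S : Set V}

theorem exists_shorter_cycle_of_chord (hE : ∀ v, ¬ E v v) {m : ℕ} {v : Fin (m + 2) → V}
    (hinj : Function.Injective v) (hcyc : ∀ i, E (v i) (v (i + 1))) {p q : Fin (m + 2)}
    (hpq : E (v p) (v q)) (hq : q ≠ p + 1) :
    ∃ k < m, ∃ w : Fin (k + 2) → V, Function.Injective w ∧ (∀ i, w i ∈ Set.range v) ∧
      ∀ i, E (w i) (w (i + 1)) := by
  have hd_pos : (p - q).val ≠ 0 := fun h => by
    rw [Fin.val_eq_zero_iff, sub_eq_zero] at h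
    exact hE _ (h ▸ hpq)
  have hd_le : (p - q).val ≠ m + 1 := fun h => by
    have hlast : p - q = Fin.last (m + 1) := Fin.ext h
    have h0 : p - q + 1 = 0 := hlast ▸ Fin.last_add_one _
    exact hq (calc q = q + (p - q + 1) := by rw [h0, add_zero]
      _ = p + 1 := by abel)
  obtain ⟨k, hk⟩ : ∃ k, (p - q).val = k + 1 := Nat.exists_eq_succ_of_ne_zero hd_pos
  have hkm : k + 2 ≤ m + 2 := by omega
  refine ⟨k, by omega, fun i => v (q + Fin.castLE hkm i),
    hinj.comp ((add_right_injective q).comp (Fin.castLE_injective hkm)),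
    fun i => ⟨_, rfl⟩, fun i => ?_⟩
  by_cases hi : i = Fin.last (k + 1)
  · subst hi
    have hp : q + Fin.castLE hkm (Fin.last (k + 1)) = p := by
      rw [show Fin.castLE hkm (Fin.last (k + 1)) = p - q from Fin.ext (by simp [hk]),
        add_sub_cancel]
    dsimp only
    rwa [Fin.last_add_one, Fin.castLE_zero, add_zero, hp]
  · have hi' : (i + 1).val = i.val + 1 := by simp [Fin.val_add_one, hi]
    have hsucc : Fin.castLE hkm (i + 1) = Fin.castLE hkm i + 1 := Fin.ext (by
      rw [Fin.val_castLE, hi', Fin.val_add, Fin.val_castLE, Fin.val_one,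
        Nat.mod_eq_of_lt (by omega)])
    simpa only [hsucc, ← add_assoc] using hcyc (q + Fin.castLE hkm i)

theorem HasCycleIn.exists_isUnicycle (hE : ∀ v, ¬ E v v) (h : HasCycleIn E S) :
    ∃ T ⊆ S, IsUnicycle E T := by
  classical
  obtain ⟨v, hinj, hmem, hcyc⟩ := Nat.find_spec h
  have hchord : ∀ p q, E (v p) (v q) → q = p + 1 := by
    intro p q hpq
    by_contra hq
    obtain ⟨k, hk, w, hw⟩ := exists_shorter_cycle_of_chord hE hinj hcyc hpq hq
    refine Nat.find_min h hk ⟨w, hw.1, fun i => ?_, hw.2.2⟩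
    obtain ⟨j, hj⟩ := hw.2.1 i
    exact hj ▸ hmem j
  refine ⟨Set.range v, Set.range_subset_iff.2 hmem, _, v, hinj, rfl, ?_⟩
  rintro _ _ ⟨p, rfl⟩ ⟨q, rfl⟩
  exact ⟨fun hpq => ⟨p, rfl, by rw [hchord p q hpq]⟩, fun ⟨i, hi, hi'⟩ => hi ▸ hi' ▸ hcyc i⟩

theorem IsUnicycle.hasCycleIn (h : IsUnicycle E S) : HasCycleIn E S := by
  obtain ⟨m, v, hinj, rfl, hedge⟩ := h
  exact ⟨m, v, hinj, Set.mem_range_self, fun i =>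
    (hedge _ _ (Set.mem_range_self _) (Set.mem_range_self _)).2 ⟨i, rfl, rfl⟩⟩

theorem IsUnicycle.exists_inUnicycle (h : IsUnicycle E S) :
    ∃ x ∈ S, ∃ y ∈ S, InUnicycle E x y := by
  obtain ⟨m, v, -, hmem, hcyc⟩ := h.hasCycleIn
  exact ⟨v 0, hmem 0, v (0 + 1), hmem _, hcyc 0, S, h, hmem 0, hmem _⟩

theorem IsUnicycle.symm_of_bidirectional (h : IsUnicycle E S) {a b : V} (ha : a ∈ S)
    (hb : b ∈ S) (hab : E a b) (hba : E b a) {x y : V} (hx : x ∈ S) (hy : y ∈ S)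
    (hxy : E x y) : E y x := by
  obtain ⟨m, v, hinj, -, hedge⟩ := h
  obtain ⟨i, rfl, rfl⟩ := (hedge a b ha hb).1 hab
  obtain ⟨j, hj, hj'⟩ := (hedge _ _ hb ha).1 hba
  have htwo : (1 + 1 : Fin (m + 2)) = 0 := add_eq_left.1 (calc
    i + (1 + 1) = j + 1 := by rw [hinj hj, add_assoc]
    _ = i := hinj hj')
  obtain ⟨p, rfl, rfl⟩ := (hedge x y hx hy).1 hxy
  exact (hedge _ _ hy hx).2 ⟨p + 1, rfl, by rw [add_assoc, htwo, add_zero]⟩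

end IC

theorem unicycle_bidirectional_tfae_general
    {V : Type}
    (E : V → V → Prop) (hE : ∀ v, ¬ E v v) :
    List.TFAE [
      ∀ K : Set V, (∀ i ∈ K, ∀ j ∈ K, i ≠ j → (¬ E i j ∨ ¬ E j i)) →
        ¬ IC.HasCycleIn E K,
      ∀ S : Set V, IC.HasCycleIn E S →
        ∃ i ∈ S, ∃ j ∈ S, E i j ∧ E j i,
      ∀ x y, E x y → ¬ E y x → ¬ IC.InUnicycle E x y,
      ∀ x y, IC.InUnicycle E x y → IC.InUnicycle E y x ] := by
  tfae_have 1 ↔ 2 := by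
    refine forall_congr' fun S => ⟨fun h hS => ?_, fun h hK hS => ?_⟩
    · by_contra! hno
      exact h (fun i hi j hj _ => not_and_or.1 fun hij => hno i hi j hj hij.1 hij.2) hS
    · obtain ⟨i, hi, j, hj, hij, hji⟩ := h hS
      exact (hK i hi j hj (by rintro rfl; exact hE i hij)).elim (· hij) (· hji)
  tfae_have 2 → 3 := by
    rintro h2 x y hxy hyx ⟨-, T, hT, hx, hy⟩
    obtain ⟨i, hi, j, hj, hij, hji⟩ := h2 T hT.hasCycleIn
    exact hyx (hT.symm_of_bidirectional hi hj hij hji hx hy hxy)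
  tfae_have 3 → 2 := by
    intro h3 S hS
    obtain ⟨T, hTS, hT⟩ := hS.exists_isUnicycle hE
    obtain ⟨x, hx, y, hy, hxy⟩ := hT.exists_inUnicycle
    exact ⟨x, hTS hx, y, hTS hy, hxy.1, not_not.1 fun hyx => h3 x y hxy.1 hyx hxy⟩
  tfae_have 3 → 4 := by
    rintro h3 x y ⟨hxy, T, hT, hx, hy⟩
    exact ⟨not_not.1 fun hyx => h3 x y hxy hyx ⟨hxy, T, hT, hx, hy⟩, T, hT, hy, hx⟩
  tfae_have 4 → 3 := fun h4 x y _ hyx hu => hyx (h4 x y hu).1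
  tfae_finish

/-- The four statements are equivalent: (1) for each clique
`K` of `U(Ḡ)` the induced subgraph `G|_K` has no directed cycle; (2) whenever
`G|_S` has a directed cycle, `G|_S` contains a bidirectional edge; (3) no
unidirectional edge of `G` belongs to a unicycle of `G`; (4) the graph `G'` of
edges of `G` belonging to a unicycle is bidirectional. -/
theorem unicycle_bidirectional_tfae
    {V : Type} [Fintype V]
    (E : V → V → Prop) (hE : ∀ v, ¬ E v v) :
    List.TFAE [
      ∀ K : Set V, (∀ i ∈ K, ∀ j ∈ K, i ≠ j → (¬ E i j ∨ ¬ E j i)) →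
        ¬ IC.HasCycleIn E K,
      ∀ S : Set V, IC.HasCycleIn E S →
        ∃ i ∈ S, ∃ j ∈ S, E i j ∧ E j i,
      ∀ x y, E x y → ¬ E y x → ¬ IC.InUnicycle E x y,
      ∀ x y, IC.InUnicycle E x y → IC.InUnicycle E y x ] :=
  unicycle_bidirectional_tfae_general E hE
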